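/- arXiv:1507.01741 — 2 statements merged into one kernel-verified Lean document; each statement's English description precedes it below -/
import Mathlib

section
/- For every t ∈ [0,T] one has ∫_{ℝⁿ} (y(x,t) − f(x))² dx ≤ c_max² · t² · ∫_{ℝⁿ} |∇f(x)|² dx. -/
/-!
The energy `E(t) = ∫ c⁻² (∂ₜy)² + |∇ₓy|²` is conserved: its density satisfies
`∂ₜ(c⁻² (∂ₜy)² + |∇ₓy|²) = 2 div(∂ₜy ∇ₓy)` by the wave equation and the symmetry of second
derivatives, and a compactly supported divergence integrates to zero. Hence
`∫ (∂ₜy)² ≤ c_max² E(t) = c_max² E(0) = c_max² ∫ |∇f|²` at every time. Finally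
`y(x,t) - f(x) = ∫₀ᵗ ∂ₜy(x,s) ds`, so by Cauchy–Schwarz `(y(x,t) - f(x))² ≤ t ∫₀ᵗ (∂ₜy)²`, and
integrating in `x` and exchanging the integrals gives the bound.
-/

open MeasureTheory

/-- Sum of the second partial derivatives (spatial Laplacian) of `u` at `x`. -/
noncomputable def spatialLaplacian {n : ℕ} (u : EuclideanSpace ℝ (Fin n) → ℝ)
    (x : EuclideanSpace ℝ (Fin n)) : ℝ :=
  ∑ i : Fin n,
    fderiv ℝ (fun z => fderiv ℝ u z (EuclideanSpace.single i 1)) x (EuclideanSpace.single i 1)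

open Set Filter Topology Function

section Calculus

variable {E F : Type*} [NormedAddCommGroup E] [NormedSpace ℝ E]
  [NormedAddCommGroup F] [NormedSpace ℝ F]

theorem norm_gradient_sq_eq_sum {n : ℕ} (u : EuclideanSpace ℝ (Fin n) → ℝ)
    (x : EuclideanSpace ℝ (Fin n)) :
    ‖gradient u x‖ ^ 2 = ∑ i, fderiv ℝ u x (EuclideanSpace.single i 1) ^ 2 := by
  rw [EuclideanSpace.norm_sq_eq]
  refine Finset.sum_congr rfl fun i _ => ?_
  have h := InnerProductSpace.toDual_symm_apply (𝕜 := ℝ) (x := EuclideanSpace.single i 1)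
    (y := fderiv ℝ u x)
  rw [EuclideanSpace.inner_single_right] at h
  rw [Real.norm_eq_abs, sq_abs, gradient, ← h]
  simp

theorem hasDerivAt_comp_prodMk_right {g : E × ℝ → F} {x : E} {t : ℝ}
    (hg : DifferentiableAt ℝ g (x, t)) :
    HasDerivAt (fun s => g (x, s)) (fderiv ℝ g (x, t) (0, 1)) t :=
  hg.hasFDerivAt.comp_hasDerivAt t ((hasDerivAt_const t x).prodMk (hasDerivAt_id t))

theorem fderiv_comp_prodMk_left_apply {g : E × ℝ → F} {x : E} {t : ℝ}
    (hg : DifferentiableAt ℝ g (x, t)) (w : E) :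
    fderiv ℝ (fun z => g (z, t)) x w = fderiv ℝ g (x, t) (w, 0) := by
  have h : HasFDerivAt (fun z => g (z, t)) ((fderiv ℝ g (x, t)).comp (.inl ℝ E ℝ)) x :=
    hg.hasFDerivAt.comp x (hasFDerivAt_prodMk_left x t)
  rw [h.fderiv]
  rfl

theorem fderiv_apply_const_apply {g : E → E →L[ℝ] F} {x : E} (hg : DifferentiableAt ℝ g x)
    (v w : E) : fderiv ℝ (fun z => g z v) x w = fderiv ℝ g x w v := by
  rw [fderiv_clm_apply hg (differentiableAt_const v)]
  simp

theorem fderiv_eq_zero_of_mem_closure {g : E → F} {U : Set E} (hU : IsOpen U)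
    (hg : EqOn g 0 U) (hg' : Continuous (fderiv ℝ g)) {x : E} (hx : x ∈ closure U) :
    fderiv ℝ g x = 0 := by
  have hzero : EqOn (fderiv ℝ g) 0 U := fun z hz => by
    rw [(eventuallyEq_of_mem (hU.mem_nhds hz) hg).fderiv_eq]
    exact fderiv_const_apply 0
  exact hzero.closure hg' continuous_const hx

end Calculus

theorem sq_integral_le_measureReal_mul_integral_sq {α : Type*} [MeasurableSpace α]
    {μ : Measure α} [IsFiniteMeasure μ] {g : α → ℝ} (hg : Integrable g μ)
    (hg2 : Integrable (fun a => g a ^ 2) μ) :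
    (∫ a, g a ∂μ) ^ 2 ≤ μ.real univ * ∫ a, g a ^ 2 ∂μ := by
  set r := μ.real univ
  set A := ∫ a, g a ∂μ
  rcases (measureReal_nonneg : 0 ≤ r).eq_or_lt with hr | hr
  · have hμ : μ = 0 := Measure.measure_univ_eq_zero.mp ((measureReal_eq_zero_iff).mp hr.symm)
    simp [A, hμ]
  have hexpand : ∫ a, (r * g a - A) ^ 2 ∂μ = r * (r * ∫ a, g a ^ 2 ∂μ - A ^ 2) := by
    have h : ∀ a, (r * g a - A) ^ 2 = r ^ 2 * g a ^ 2 - 2 * r * A * g a + A ^ 2 := fun a => by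
      ring
    have h1 : Integrable (fun a => r ^ 2 * g a ^ 2) μ := hg2.const_mul _
    have h2 : Integrable (fun a => 2 * r * A * g a) μ := hg.const_mul _
    simp_rw [h]
    rw [integral_add (by exact h1.sub h2) (integrable_const _), integral_sub h1 h2,
      integral_const_mul, integral_const_mul, integral_const, smul_eq_mul]
    ring
  have := hexpand ▸ integral_nonneg fun a => sq_nonneg (r * g a - A)
  nlinarith

theorem sq_sub_le_mul_integral_sq_deriv {g g' : ℝ → ℝ} {a b : ℝ} (hab : a ≤ b)
    (hg : ∀ s ∈ Icc a b, HasDerivAt g (g' s) s) (hg' : ContinuousOn g' (Icc a b)) :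
    (g b - g a) ^ 2 ≤ (b - a) * ∫ s in a..b, g' s ^ 2 := by
  have hint := (hg'.integrableOn_Icc (μ := volume)).mono_set Ioc_subset_Icc_self
  rw [← intervalIntegral.integral_eq_sub_of_hasDerivAt (by rwa [uIcc_of_le hab])
      ((intervalIntegrable_iff_integrableOn_Ioc_of_le hab).mpr hint),
    intervalIntegral.integral_of_le hab, intervalIntegral.integral_of_le hab]
  have : Fact (volume (Ioc a b) < ⊤) := ⟨measure_Ioc_lt_top⟩
  convert sq_integral_le_measureReal_mul_integral_sq hint
    (((hg'.pow 2).integrableOn_Icc (μ := volume)).mono_set Ioc_subset_Icc_self) using 2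
  simp [hab]

theorem norm_le_indicator_of_abs_le {X : Type*} {K : Set X} {g : X → ℝ} {M : ℝ}
    (hzero : ∀ x ∉ K, g x = 0) (hM : ∀ x ∈ K, |g x| ≤ M) (x : X) :
    ‖g x‖ ≤ K.indicator (fun _ => M) x := by
  by_cases hx : x ∈ K
  · simpa [hx] using hM x hx
  · simp [hx, hzero x hx]

section CompactSupport

variable {X : Type*} [TopologicalSpace X] [T2Space X] [MeasurableSpace X]
  [OpensMeasurableSpace X] {μ : Measure X} [IsFiniteMeasureOnCompacts μ] {K : Set X}

theorem IsCompact.integrable_indicator_const (hK : IsCompact K) (M : ℝ) :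
    Integrable (K.indicator fun _ => M) μ :=
  (integrable_indicator_iff hK.measurableSet).mpr (integrableOn_const hK.measure_ne_top)

theorem IsCompact.integrable_of_abs_le {g φ : X → ℝ} (hK : IsCompact K)
    (hg : AEStronglyMeasurable g μ) (hφ : ContinuousOn φ K) (hle : ∀ x ∈ K, |g x| ≤ φ x)
    (hzero : ∀ x ∉ K, g x = 0) : Integrable g μ := by
  obtain ⟨M, hM⟩ := hK.exists_bound_of_continuousOn hφ
  refine (hK.integrable_indicator_const M).mono' hg (ae_of_all _ ?_)
  exact norm_le_indicator_of_abs_le hzero fun x hx =>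
    (hle x hx).trans ((le_abs_self _).trans (hM x hx))

theorem continuousOn_integral_of_abs_le {G : X → ℝ → ℝ} {Φ : X × ℝ → ℝ}
    (hK : IsCompact K) {S : Set ℝ} (hS : IsCompact S)
    (hG_meas : ∀ s ∈ S, AEStronglyMeasurable (fun x => G x s) μ)
    (hG_cont : ∀ x, ContinuousOn (G x) S) (hΦ : ContinuousOn Φ (K ×ˢ S))
    (hle : ∀ x ∈ K, ∀ s ∈ S, |G x s| ≤ Φ (x, s)) (hzero : ∀ x ∉ K, ∀ s ∈ S, G x s = 0) :
    ContinuousOn (fun t => ∫ x, G x t ∂μ) S := by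
  obtain ⟨M, hM⟩ := (hK.prod hS).exists_bound_of_continuousOn hΦ
  refine continuousOn_of_dominated hG_meas (fun s hs => ae_of_all _ ?_)
    (hK.integrable_indicator_const M) (ae_of_all _ hG_cont)
  exact norm_le_indicator_of_abs_le (hzero · · s hs) fun x hx =>
    (hle x hx s hs).trans ((le_abs_self _).trans (hM (x, s) ⟨hx, hs⟩))

theorem hasDerivAt_integral_of_compact_support {G G' : X → ℝ → ℝ} (hK : IsCompact K)
    {a b t₀ : ℝ} (ht₀ : t₀ ∈ Ioo a b)
    (hG_meas : ∀ s ∈ Ioo a b, AEStronglyMeasurable (fun x => G x s) μ)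
    (hG_int : Integrable (fun x => G x t₀) μ) (hG' : Continuous (uncurry G'))
    (hderiv : ∀ x, ∀ s ∈ Ioo a b, HasDerivAt (G x) (G' x s) s)
    (hzero : ∀ x ∉ K, ∀ s ∈ Ioo a b, G x s = 0) :
    HasDerivAt (fun t => ∫ x, G x t ∂μ) (∫ x, G' x t₀ ∂μ) t₀ := by
  obtain ⟨M, hM⟩ := (hK.prod isCompact_Icc).exists_bound_of_continuousOn
    (hG'.continuousOn (s := K ×ˢ Icc a b))
  -- outside `K`, `G x` vanishes on the open interval, hence so does its derivative
  have hG'zero : ∀ x ∉ K, ∀ s ∈ Ioo a b, G' x s = 0 := fun x hx s hs =>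
    (hderiv x s hs).unique ((hasDerivAt_const s 0).congr_of_eventuallyEq
      (eventually_of_mem (isOpen_Ioo.mem_nhds hs) fun r hr => hzero x hx r hr))
  refine (hasDerivAt_integral_of_dominated_loc_of_deriv_le (isOpen_Ioo.mem_nhds ht₀)
    (eventually_of_mem (isOpen_Ioo.mem_nhds ht₀) hG_meas) hG_int
    (hG'.comp (Continuous.prodMk_left t₀)).aestronglyMeasurable
    (ae_of_all _ fun x s hs => ?_) (hK.integrable_indicator_const M)
    (ae_of_all _ fun x s hs => hderiv x s hs)).2
  exact norm_le_indicator_of_abs_le (hG'zero · · s hs)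
    (fun x hx => hM (x, s) ⟨hx, Ioo_subset_Icc_self hs⟩) x

theorem integral_intervalIntegral_swap_of_compact_support [SecondCountableTopology X]
    [SFinite μ] {W : X × ℝ → ℝ} (hW : Continuous W) (hK : IsCompact K) {a b : ℝ} (hab : a ≤ b)
    (hzero : ∀ x ∉ K, ∀ s ∈ Icc a b, W (x, s) = 0) :
    Integrable (fun x => ∫ s in a..b, W (x, s)) μ ∧
      ∫ x, (∫ s in a..b, W (x, s)) ∂μ = ∫ s in a..b, ∫ x, W (x, s) ∂μ := by
  have hint : Integrable W (μ.prod (volume.restrict (Ioc a b))) := by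
    rw [← Measure.restrict_univ (μ := μ), Measure.prod_restrict]
    refine (hW.continuousOn.integrableOn_compact (hK.prod (isCompact_Icc (a := a) (b := b))))
      |>.of_forall_sdiff_eq_zero (MeasurableSet.univ.prod measurableSet_Ioc) ?_
    rintro ⟨x, s⟩ ⟨⟨-, hs⟩, hxs⟩
    exact hzero x (fun hx => hxs ⟨hx, Ioc_subset_Icc_self hs⟩) s (Ioc_subset_Icc_self hs)
  simp_rw [intervalIntegral.integral_of_le hab]
  exact ⟨hint.integral_prod_left, integral_integral_swap (f := fun x s => W (x, s)) hint⟩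

end CompactSupport

section IntegrationByParts

variable {E : Type*} [NormedAddCommGroup E] [NormedSpace ℝ E] [MeasurableSpace E]
  [BorelSpace E] {μ : Measure E} {g : E → ℝ}

theorem HasCompactSupport.integrable_fderiv_apply [IsFiniteMeasureOnCompacts μ]
    (hsupp : HasCompactSupport g) (hg : ContDiff ℝ 1 g) (v : E) :
    Integrable (fun x => fderiv ℝ g x v) μ :=
  ((hg.continuous_fderiv one_ne_zero).clm_apply continuous_const).integrable_of_hasCompactSupport
    (hsupp.fderiv_apply (𝕜 := ℝ) v)

theorem HasCompactSupport.integral_fderiv_apply_eq_zero [FiniteDimensional ℝ E]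
    [μ.IsAddHaarMeasure] (hsupp : HasCompactSupport g) (hg : ContDiff ℝ 1 g) (v : E) :
    ∫ x, fderiv ℝ g x v ∂μ = 0 := by
  have h := integral_mul_fderiv_eq_neg_fderiv_mul_of_integrable (μ := μ) (f := fun _ => 1)
    (g := g) (v := v) (by simp) (by simpa using hsupp.integrable_fderiv_apply hg v)
    (by simpa using hg.continuous.integrable_of_hasCompactSupport hsupp)
    (fun _ _ => differentiableAt_const 1) (fun x _ => hg.differentiable one_ne_zero x)
  simpa using h

end IntegrationByParts

theorem constant_of_hasDerivAt_zero {f : ℝ → ℝ} {a b : ℝ} (hf : ContinuousOn f (Icc a b))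
    (hf' : ∀ x ∈ Ioo a b, HasDerivAt f 0 x) : ∀ x ∈ Icc a b, f x = f a := by
  rintro x ⟨hax, hxb⟩
  rcases hax.eq_or_lt with rfl | hax
  · rfl
  obtain ⟨ξ, hξ, h⟩ := exists_hasDerivAt_eq_slope f (fun _ => 0) hax
    (hf.mono (Icc_subset_Icc_right hxb)) fun ξ hξ => hf' ξ ⟨hξ.1, hξ.2.trans_le hxb⟩
  rw [eq_comm, div_eq_zero_iff, sub_eq_zero, sub_eq_zero] at h
  exact h.resolve_right hax.ne'

theorem intervalIntegral_le_mul_sub_of_nonneg {F : ℝ → ℝ} {a b C : ℝ} (hab : a ≤ b)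
    (hF : ∀ s ∈ Ioc a b, 0 ≤ F s ∧ F s ≤ C) : ∫ s in a..b, F s ≤ C * (b - a) := by
  have h := intervalIntegral.norm_integral_le_of_norm_le_const (f := F) fun s hs => by
    rw [uIoc_of_le hab] at hs
    rw [Real.norm_of_nonneg (hF s hs).1]
    exact (hF s hs).2
  rw [abs_of_nonneg (sub_nonneg.mpr hab)] at h
  exact (le_abs_self _).trans h

namespace AcousticWave

open EuclideanSpace

variable {n : ℕ}

noncomputable def energyDensity (c : EuclideanSpace ℝ (Fin n) → ℝ)
    (y : EuclideanSpace ℝ (Fin n) → ℝ → ℝ) (x : EuclideanSpace ℝ (Fin n)) (t : ℝ) : ℝ :=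
  (c x ^ 2)⁻¹ * deriv (y x) t ^ 2 + ‖gradient (fun x' => y x' t) x‖ ^ 2

noncomputable def energy (c : EuclideanSpace ℝ (Fin n) → ℝ)
    (y : EuclideanSpace ℝ (Fin n) → ℝ → ℝ) (t : ℝ) : ℝ :=
  ∫ x, energyDensity c y x t

/-- `2 div(∂ₜy ∇ₓy)`, in terms of the first and second derivatives of `uncurry y`. -/
noncomputable def energyFluxDiv (y : EuclideanSpace ℝ (Fin n) → ℝ → ℝ)
    (p : EuclideanSpace ℝ (Fin n) × ℝ) : ℝ :=
  2 * ∑ i, (fderiv ℝ (uncurry y) p (0, 1) *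
      fderiv ℝ (fderiv ℝ (uncurry y)) p (single i 1, 0) (single i 1, 0) +
    fderiv ℝ (fderiv ℝ (uncurry y)) p (single i 1, 0) (0, 1) *
      fderiv ℝ (uncurry y) p (single i 1, 0))

noncomputable def energyDensityBound (c_min : ℝ) (y : EuclideanSpace ℝ (Fin n) → ℝ → ℝ)
    (p : EuclideanSpace ℝ (Fin n) × ℝ) : ℝ :=
  (c_min ^ 2)⁻¹ * fderiv ℝ (uncurry y) p (0, 1) ^ 2
    + ∑ i, fderiv ℝ (uncurry y) p (single i 1, 0) ^ 2

variable {y : EuclideanSpace ℝ (Fin n) → ℝ → ℝ}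

theorem contDiff_fderiv_uncurry_apply (hy : ContDiff ℝ 2 (uncurry y))
    (v : EuclideanSpace ℝ (Fin n) × ℝ) : ContDiff ℝ 1 fun p => fderiv ℝ (uncurry y) p v :=
  (hy.fderiv_right le_rfl).clm_apply contDiff_const

theorem deriv_eq_fderiv_uncurry (hy : ContDiff ℝ 2 (uncurry y)) (x : EuclideanSpace ℝ (Fin n))
    (t : ℝ) : deriv (y x) t = fderiv ℝ (uncurry y) (x, t) (0, 1) :=
  (hasDerivAt_comp_prodMk_right (hy.differentiable two_ne_zero _)).deriv

theorem fderiv_apply_eq_fderiv_uncurry (hy : ContDiff ℝ 2 (uncurry y))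
    (x w : EuclideanSpace ℝ (Fin n)) (t : ℝ) :
    fderiv ℝ (fun x' => y x' t) x w = fderiv ℝ (uncurry y) (x, t) (w, 0) :=
  fderiv_comp_prodMk_left_apply (hy.differentiable two_ne_zero _) w

theorem hasDerivAt_fderiv_uncurry_apply (hy : ContDiff ℝ 2 (uncurry y))
    (v : EuclideanSpace ℝ (Fin n) × ℝ) (x : EuclideanSpace ℝ (Fin n)) (t : ℝ) :
    HasDerivAt (fun s => fderiv ℝ (uncurry y) (x, s) v)
      (fderiv ℝ (fderiv ℝ (uncurry y)) (x, t) (0, 1) v) t := by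
  have hd := (hy.fderiv_right le_rfl).differentiable one_ne_zero (x, t)
  rw [← fderiv_apply_const_apply hd]
  exact hasDerivAt_comp_prodMk_right (((contDiff_fderiv_uncurry_apply hy v).differentiable
    one_ne_zero) _)

theorem fderiv_fderiv_uncurry_apply_left (hy : ContDiff ℝ 2 (uncurry y))
    (v : EuclideanSpace ℝ (Fin n) × ℝ) (x w : EuclideanSpace ℝ (Fin n)) (t : ℝ) :
    fderiv ℝ (fun z => fderiv ℝ (uncurry y) (z, t) v) x w
      = fderiv ℝ (fderiv ℝ (uncurry y)) (x, t) (w, 0) v := by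
  rw [fderiv_comp_prodMk_left_apply (((contDiff_fderiv_uncurry_apply hy v).differentiable
    one_ne_zero) _), fderiv_apply_const_apply ((hy.fderiv_right le_rfl).differentiable
    one_ne_zero _)]

theorem deriv_deriv_eq_fderiv_fderiv_uncurry (hy : ContDiff ℝ 2 (uncurry y))
    (x : EuclideanSpace ℝ (Fin n)) (t : ℝ) :
    deriv (deriv (y x)) t = fderiv ℝ (fderiv ℝ (uncurry y)) (x, t) (0, 1) (0, 1) := by
  rw [funext (deriv_eq_fderiv_uncurry hy x)]
  exact (hasDerivAt_fderiv_uncurry_apply hy _ x t).deriv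

theorem spatialLaplacian_eq_sum_fderiv_fderiv_uncurry (hy : ContDiff ℝ 2 (uncurry y))
    (x : EuclideanSpace ℝ (Fin n)) (t : ℝ) :
    spatialLaplacian (fun x' => y x' t) x
      = ∑ i, fderiv ℝ (fderiv ℝ (uncurry y)) (x, t) (single i 1, 0) (single i 1, 0) := by
  refine Finset.sum_congr rfl fun i _ => ?_
  simp only [fderiv_apply_eq_fderiv_uncurry hy, fderiv_fderiv_uncurry_apply_left hy]

theorem energyDensity_eq (hy : ContDiff ℝ 2 (uncurry y)) (c : EuclideanSpace ℝ (Fin n) → ℝ)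
    (x : EuclideanSpace ℝ (Fin n)) (t : ℝ) :
    energyDensity c y x t = (c x ^ 2)⁻¹ * fderiv ℝ (uncurry y) (x, t) (0, 1) ^ 2
      + ∑ i, fderiv ℝ (uncurry y) (x, t) (single i 1, 0) ^ 2 := by
  simp only [energyDensity, norm_gradient_sq_eq_sum, deriv_eq_fderiv_uncurry hy,
    fderiv_apply_eq_fderiv_uncurry hy]

theorem fderiv_uncurry_eq_zero_of_notMem {K : Set (EuclideanSpace ℝ (Fin n))} {T : ℝ}
    (hy : ContDiff ℝ 2 (uncurry y)) (hK : IsClosed K) (hT : 0 < T)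
    (hyK : ∀ x ∉ K, ∀ t ∈ Icc (0 : ℝ) T, y x t = 0) {x : EuclideanSpace ℝ (Fin n)} (hx : x ∉ K)
    {t : ℝ} (ht : t ∈ Icc 0 T) : fderiv ℝ (uncurry y) (x, t) = 0 := by
  refine fderiv_eq_zero_of_mem_closure (hK.isOpen_compl.prod isOpen_Ioo)
    (fun p hp => hyK p.1 hp.1 p.2 (Ioo_subset_Icc_self hp.2)) (hy.continuous_fderiv two_ne_zero) ?_
  rw [closure_prod_eq, closure_Ioo hT.ne]
  exact ⟨subset_closure hx, ht⟩

theorem hasDerivAt_energyDensity (hy : ContDiff ℝ 2 (uncurry y))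
    {c : EuclideanSpace ℝ (Fin n) → ℝ} {x : EuclideanSpace ℝ (Fin n)} {t : ℝ}
    (hwave : (c x ^ 2)⁻¹ * deriv (deriv (y x)) t = spatialLaplacian (fun x' => y x' t) x) :
    HasDerivAt (energyDensity c y x) (energyFluxDiv y (x, t)) t := by
  set D2 := fderiv ℝ (fderiv ℝ (uncurry y)) (x, t)
  have hsymm : ∀ v w, D2 v w = D2 w v := hy.contDiffAt.isSymmSndFDerivAt (by simp)
  rw [deriv_deriv_eq_fderiv_fderiv_uncurry hy,
    spatialLaplacian_eq_sum_fderiv_fderiv_uncurry hy] at hwave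
  have hsq : ∀ v, HasDerivAt (fun s => fderiv ℝ (uncurry y) (x, s) v ^ 2)
      (2 * fderiv ℝ (uncurry y) (x, t) v * D2 (0, 1) v) t := fun v => by
    simpa using (hasDerivAt_fderiv_uncurry_apply hy v x t).fun_pow 2
  rw [funext (energyDensity_eq hy c x)]
  refine (((hsq (0, 1)).const_mul (c x ^ 2)⁻¹).add
    (HasDerivAt.fun_sum fun i _ => hsq (single i 1, 0))).congr_deriv ?_
  rw [show ∀ a b : ℝ, (c x ^ 2)⁻¹ * (2 * a * b) = 2 * a * ((c x ^ 2)⁻¹ * b) by intros; ring,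
    hwave, energyFluxDiv, Finset.mul_sum, Finset.mul_sum, ← Finset.sum_add_distrib]
  refine Finset.sum_congr rfl fun i _ => ?_
  rw [hsymm (0, 1)]
  ring

theorem integral_energyFluxDiv_eq_zero (hy : ContDiff ℝ 2 (uncurry y))
    {K : Set (EuclideanSpace ℝ (Fin n))} (hK : IsCompact K) {t : ℝ}
    (hvanish : ∀ x ∉ K, fderiv ℝ (uncurry y) (x, t) = 0) :
    ∫ x, energyFluxDiv y (x, t) = 0 := by
  have hslice : ∀ v, ContDiff ℝ 1 fun z => fderiv ℝ (uncurry y) (z, t) v := fun v =>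
    (contDiff_fderiv_uncurry_apply hy v).comp (contDiff_id.prodMk contDiff_const)
  set g : Fin n → EuclideanSpace ℝ (Fin n) → ℝ := fun i z =>
    fderiv ℝ (uncurry y) (z, t) (0, 1) * fderiv ℝ (uncurry y) (z, t) (single i 1, 0)
  have hg : ∀ i, ContDiff ℝ 1 (g i) := fun i => (hslice _).mul (hslice _)
  have hsupp : ∀ i, HasCompactSupport (g i) := fun i =>
    HasCompactSupport.intro hK fun z hz => by simp [g, hvanish z hz]
  have hdiv : ∀ x, energyFluxDiv y (x, t) = 2 * ∑ i, fderiv ℝ (g i) x (single i 1) := by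
    intro x
    simp only [energyFluxDiv, g]
    refine congrArg (2 * ·) (Finset.sum_congr rfl fun i _ => ?_)
    rw [fderiv_fun_mul ((hslice _).differentiable one_ne_zero x)
      ((hslice _).differentiable one_ne_zero x)]
    simp only [add_apply, smul_apply, smul_eq_mul,
      fderiv_fderiv_uncurry_apply_left hy]
    ring
  simp_rw [hdiv, integral_const_mul]
  rw [integral_finsetSum _ fun i _ => (hsupp i).integrable_fderiv_apply (hg i) _]
  simp [fun i => (hsupp i).integral_fderiv_apply_eq_zero (μ := volume) (hg i)]

variable {c : EuclideanSpace ℝ (Fin n) → ℝ} {c_min T : ℝ}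
  {K : Set (EuclideanSpace ℝ (Fin n))}

theorem continuous_fderiv_uncurry_apply (hy : ContDiff ℝ 2 (uncurry y))
    (v : EuclideanSpace ℝ (Fin n) × ℝ) : Continuous fun p => fderiv ℝ (uncurry y) p v :=
  (contDiff_fderiv_uncurry_apply hy v).continuous

theorem continuous_energyFluxDiv (hy : ContDiff ℝ 2 (uncurry y)) :
    Continuous (energyFluxDiv y) := by
  have h2 := (hy.fderiv_right le_rfl).continuous_fderiv one_ne_zero
  have h1 := continuous_fderiv_uncurry_apply hy
  unfold energyFluxDiv
  fun_prop

theorem aestronglyMeasurable_energyDensity (hy : ContDiff ℝ 2 (uncurry y))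
    (hc_meas : Measurable c) (t : ℝ) :
    AEStronglyMeasurable (fun x => energyDensity c y x t) volume := by
  have hslice : ∀ v, Measurable fun x => fderiv ℝ (uncurry y) (x, t) v := fun v =>
    ((continuous_fderiv_uncurry_apply hy v).comp (.prodMk_left t)).measurable
  simp_rw [energyDensity_eq hy]
  exact (((hc_meas.pow_const 2).inv.mul ((hslice _).pow_const 2)).add
    (Finset.measurable_sum _ fun i _ => (hslice _).pow_const 2)).aestronglyMeasurable

theorem abs_energyDensity_le (hy : ContDiff ℝ 2 (uncurry y)) (hc_min_pos : 0 < c_min)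
    {x : EuclideanSpace ℝ (Fin n)} (hc_min : c_min ≤ c x) (t : ℝ) :
    |energyDensity c y x t| ≤ energyDensityBound c_min y (x, t) := by
  rw [energyDensity_eq hy, abs_of_nonneg (by positivity), energyDensityBound]
  gcongr

theorem energyDensity_eq_zero (hy : ContDiff ℝ 2 (uncurry y)) {x : EuclideanSpace ℝ (Fin n)}
    {t : ℝ} (h : fderiv ℝ (uncurry y) (x, t) = 0) : energyDensity c y x t = 0 := by
  simp [energyDensity_eq hy, h]

theorem continuous_energyDensityBound (hy : ContDiff ℝ 2 (uncurry y)) (c_min : ℝ) :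
    Continuous (energyDensityBound c_min y) := by
  have := continuous_fderiv_uncurry_apply hy
  unfold energyDensityBound
  fun_prop

theorem integrable_energyDensity (hy : ContDiff ℝ 2 (uncurry y)) (hc_meas : Measurable c)
    (hc_min_pos : 0 < c_min) (hc_min : ∀ x, c_min ≤ c x) (hK : IsCompact K) {t : ℝ}
    (hvanish : ∀ x ∉ K, fderiv ℝ (uncurry y) (x, t) = 0) :
    Integrable fun x => energyDensity c y x t :=
  hK.integrable_of_abs_le (aestronglyMeasurable_energyDensity hy hc_meas t)
    ((continuous_energyDensityBound hy c_min).comp (.prodMk_left t)).continuousOn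
    (fun x _ => abs_energyDensity_le hy hc_min_pos (hc_min x) t)
    fun x hx => energyDensity_eq_zero hy (hvanish x hx)

theorem continuousOn_energy (hy : ContDiff ℝ 2 (uncurry y)) (hc_meas : Measurable c)
    (hc_min_pos : 0 < c_min) (hc_min : ∀ x, c_min ≤ c x) (hK : IsCompact K)
    (hvanish : ∀ x ∉ K, ∀ t ∈ Icc 0 T, fderiv ℝ (uncurry y) (x, t) = 0) :
    ContinuousOn (energy c y) (Icc 0 T) := by
  refine continuousOn_integral_of_abs_le hK isCompact_Icc
    (fun s _ => aestronglyMeasurable_energyDensity hy hc_meas s) (fun x => ?_)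
    (continuous_energyDensityBound hy c_min).continuousOn
    (fun x _ s _ => abs_energyDensity_le hy hc_min_pos (hc_min x) s)
    fun x hx s hs => energyDensity_eq_zero hy (hvanish x hx s hs)
  have := continuous_fderiv_uncurry_apply hy
  rw [funext (energyDensity_eq hy c x)]
  fun_prop

theorem hasDerivAt_energy (hy : ContDiff ℝ 2 (uncurry y)) (hc_meas : Measurable c)
    (hc_min_pos : 0 < c_min) (hc_min : ∀ x, c_min ≤ c x) (hK : IsCompact K)
    (hvanish : ∀ x ∉ K, ∀ t ∈ Icc 0 T, fderiv ℝ (uncurry y) (x, t) = 0)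
    (hwave : ∀ x, ∀ t ∈ Ioo 0 T,
      (c x ^ 2)⁻¹ * deriv (deriv (y x)) t = spatialLaplacian (fun x' => y x' t) x)
    {t : ℝ} (ht : t ∈ Ioo 0 T) : HasDerivAt (energy c y) 0 t := by
  have hvanish' : ∀ x ∉ K, ∀ s ∈ Ioo 0 T, fderiv ℝ (uncurry y) (x, s) = 0 :=
    fun x hx s hs => hvanish x hx s (Ioo_subset_Icc_self hs)
  have h := hasDerivAt_integral_of_compact_support (G' := fun x s => energyFluxDiv y (x, s)) hK ht
    (fun s _ => aestronglyMeasurable_energyDensity hy hc_meas s)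
    (integrable_energyDensity hy hc_meas hc_min_pos hc_min hK (hvanish' · · t ht))
    (continuous_energyFluxDiv hy) (fun x s hs => hasDerivAt_energyDensity hy (hwave x s hs))
    fun x hx s hs => energyDensity_eq_zero hy (hvanish' x hx s hs)
  rwa [integral_energyFluxDiv_eq_zero hy hK (hvanish' · · t ht)] at h

theorem energy_eq_energy_zero (hy : ContDiff ℝ 2 (uncurry y)) (hc_meas : Measurable c)
    (hc_min_pos : 0 < c_min) (hc_min : ∀ x, c_min ≤ c x) (hK : IsCompact K)
    (hvanish : ∀ x ∉ K, ∀ t ∈ Icc 0 T, fderiv ℝ (uncurry y) (x, t) = 0)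
    (hwave : ∀ x, ∀ t ∈ Ioo 0 T,
      (c x ^ 2)⁻¹ * deriv (deriv (y x)) t = spatialLaplacian (fun x' => y x' t) x) :
    ∀ t ∈ Icc 0 T, energy c y t = energy c y 0 :=
  constant_of_hasDerivAt_zero (continuousOn_energy hy hc_meas hc_min_pos hc_min hK hvanish)
    fun _ => hasDerivAt_energy hy hc_meas hc_min_pos hc_min hK hvanish hwave

theorem energy_zero {f : EuclideanSpace ℝ (Fin n) → ℝ} (hinit : ∀ x, y x 0 = f x)
    (hinit' : ∀ x, deriv (y x) 0 = 0) : energy c y 0 = ∫ x, ‖gradient f x‖ ^ 2 := by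
  simp [energy, energyDensity, hinit, hinit']

theorem integral_deriv_sq_le_energy {c_max : ℝ} (hy : ContDiff ℝ 2 (uncurry y))
    (hc_meas : Measurable c) (hc_min_pos : 0 < c_min) (hc : ∀ x, c_min ≤ c x ∧ c x ≤ c_max)
    (hK : IsCompact K) {t : ℝ} (hvanish : ∀ x ∉ K, fderiv ℝ (uncurry y) (x, t) = 0) :
    ∫ x, deriv (y x) t ^ 2 ≤ c_max ^ 2 * energy c y t := by
  have hint : Integrable fun x => deriv (y x) t ^ 2 := by
    simp_rw [deriv_eq_fderiv_uncurry hy]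
    exact (((continuous_fderiv_uncurry_apply hy _).comp (.prodMk_left t)).pow 2)
      |>.integrable_of_hasCompactSupport (HasCompactSupport.intro hK fun x hx => by
        simp [hvanish x hx])
  rw [energy, ← integral_const_mul]
  refine integral_mono hint ((integrable_energyDensity hy hc_meas hc_min_pos (fun x => (hc x).1)
    hK hvanish).const_mul _) fun x => ?_
  have hcx : 0 < c x := hc_min_pos.trans_le (hc x).1
  have hratio : 1 ≤ c_max ^ 2 * (c x ^ 2)⁻¹ := by
    rw [← div_eq_mul_inv, one_le_div (by positivity)]
    exact pow_le_pow_left₀ hcx.le (hc x).2 2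
  calc deriv (y x) t ^ 2 ≤ c_max ^ 2 * ((c x ^ 2)⁻¹ * deriv (y x) t ^ 2) := by
        rw [← mul_assoc]
        exact le_mul_of_one_le_left (sq_nonneg _) hratio
    _ ≤ c_max ^ 2 * energyDensity c y x t :=
        mul_le_mul_of_nonneg_left (le_add_of_nonneg_right (sq_nonneg _)) (sq_nonneg _)

theorem integral_sq_sub_le (hy : ContDiff ℝ 2 (uncurry y)) (hK : IsCompact K) {t : ℝ}
    (ht : 0 ≤ t) (hvanish : ∀ x ∉ K, ∀ s ∈ Icc 0 t, fderiv ℝ (uncurry y) (x, s) = 0) :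
    ∫ x, (y x t - y x 0) ^ 2 ≤ t * ∫ s in 0..t, ∫ x, deriv (y x) s ^ 2 := by
  have hcont : Continuous fun p : EuclideanSpace ℝ (Fin n) × ℝ => deriv (y p.1) p.2 := by
    simp_rw [deriv_eq_fderiv_uncurry hy]
    exact continuous_fderiv_uncurry_apply hy _
  obtain ⟨hint, hswap⟩ := integral_intervalIntegral_swap_of_compact_support (μ := volume)
    (W := fun p => deriv (y p.1) p.2 ^ 2) (hcont.pow 2) hK ht fun x hx s hs => by
      simp [deriv_eq_fderiv_uncurry hy, hvanish x hx s hs]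
  have hpt : ∀ x, (y x t - y x 0) ^ 2 ≤ t * ∫ s in 0..t, deriv (y x) s ^ 2 := fun x => by
    simpa using sq_sub_le_mul_integral_sq_deriv ht
      (fun s _ => (hasDerivAt_comp_prodMk_right (hy.differentiable two_ne_zero (x, s)))
        |>.differentiableAt.hasDerivAt)
      (hcont.comp (.prodMk_right x)).continuousOn
  calc ∫ x, (y x t - y x 0) ^ 2 ≤ ∫ x, t * ∫ s in 0..t, deriv (y x) s ^ 2 :=
        integral_mono_of_nonneg (ae_of_all _ fun x => sq_nonneg _) (hint.const_mul t)
          (ae_of_all _ hpt)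
    _ = t * ∫ s in 0..t, ∫ x, deriv (y x) s ^ 2 := by rw [integral_const_mul, hswap]

end AcousticWave

open AcousticWave

theorem stmt_2_general
    {n : ℕ}
    (c : EuclideanSpace ℝ (Fin n) → ℝ) (hc_meas : Measurable c)
    (c_min c_max : ℝ) (hc_min_pos : 0 < c_min)
    (hc : ∀ x, c_min ≤ c x ∧ c x ≤ c_max)
    (T : ℝ) (hT : 0 < T)
    (f : EuclideanSpace ℝ (Fin n) → ℝ)
    (y : EuclideanSpace ℝ (Fin n) → ℝ → ℝ)
    (hy : ContDiff ℝ 2 (fun p : EuclideanSpace ℝ (Fin n) × ℝ => y p.1 p.2))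
    (K : Set (EuclideanSpace ℝ (Fin n))) (hK : IsCompact K)
    (hyK : ∀ x ∉ K, ∀ t ∈ Set.Icc (0:ℝ) T, y x t = 0)
    (hwave : ∀ x, ∀ t ∈ Set.Ioo (0:ℝ) T,
      ((c x) ^ 2)⁻¹ * deriv (deriv (y x)) t = spatialLaplacian (fun x' => y x' t) x)
    (hinit : ∀ x, y x 0 = f x)
    (hinit' : ∀ x, deriv (y x) 0 = 0)
     :
    ∀ t ∈ Set.Icc (0:ℝ) T,
      (∫ x, (y x t - f x) ^ 2) ≤ c_max ^ 2 * t ^ 2 * ∫ x, ‖gradient f x‖ ^ 2 := by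
  intro t ht
  have hvanish : ∀ x ∉ K, ∀ s ∈ Icc 0 T, fderiv ℝ (uncurry y) (x, s) = 0 :=
    fun x hx s hs => fderiv_uncurry_eq_zero_of_notMem hy hK.isClosed hT hyK hx hs
  have hsub : Icc 0 t ⊆ Icc 0 T := Icc_subset_Icc_right ht.2
  have hkinetic : ∀ s ∈ Icc 0 t,
      ∫ x, deriv (y x) s ^ 2 ≤ c_max ^ 2 * ∫ x, ‖gradient f x‖ ^ 2 := fun s hs => by
    rw [← energy_zero (c := c) hinit hinit', ← energy_eq_energy_zero hy hc_meas hc_min_pos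
      (fun x => (hc x).1) hK hvanish hwave s (hsub hs)]
    exact integral_deriv_sq_le_energy hy hc_meas hc_min_pos hc hK (hvanish · · s (hsub hs))
  have htime : ∫ s in 0..t, ∫ x, deriv (y x) s ^ 2
      ≤ c_max ^ 2 * (∫ x, ‖gradient f x‖ ^ 2) * (t - 0) :=
    intervalIntegral_le_mul_sub_of_nonneg ht.1 fun s hs =>
      ⟨integral_nonneg fun _ => sq_nonneg _, hkinetic s (Ioc_subset_Icc_self hs)⟩
  calc ∫ x, (y x t - f x) ^ 2 = ∫ x, (y x t - y x 0) ^ 2 := by simp_rw [hinit]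
    _ ≤ t * ∫ s in 0..t, ∫ x, deriv (y x) s ^ 2 :=
        integral_sq_sub_le hy hK ht.1 fun x hx s hs => hvanish x hx s (hsub hs)
    _ ≤ t * (c_max ^ 2 * (∫ x, ‖gradient f x‖ ^ 2) * (t - 0)) := by gcongr; exact ht.1
    _ = c_max ^ 2 * t ^ 2 * ∫ x, ‖gradient f x‖ ^ 2 := by ring

theorem stmt_2
    {n : ℕ} (hn : 1 ≤ n)
    (c : EuclideanSpace ℝ (Fin n) → ℝ) (hc_meas : Measurable c)
    (c_min c_max : ℝ) (hc_min_pos : 0 < c_min)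
    (hc : ∀ x, c_min ≤ c x ∧ c x ≤ c_max)
    (T : ℝ) (hT : 0 < T)
    (f : EuclideanSpace ℝ (Fin n) → ℝ)
    (hf : ContDiff ℝ 2 f) (hf_supp : HasCompactSupport f)
    (y : EuclideanSpace ℝ (Fin n) → ℝ → ℝ)
    (hy : ContDiff ℝ 2 (fun p : EuclideanSpace ℝ (Fin n) × ℝ => y p.1 p.2))
    (K : Set (EuclideanSpace ℝ (Fin n))) (hK : IsCompact K)
    (hyK : ∀ x ∉ K, ∀ t ∈ Set.Icc (0:ℝ) T, y x t = 0)
    (hwave : ∀ x, ∀ t ∈ Set.Ioo (0:ℝ) T,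
      ((c x) ^ 2)⁻¹ * deriv (deriv (y x)) t = spatialLaplacian (fun x' => y x' t) x)
    (hinit : ∀ x, y x 0 = f x)
    (hinit' : ∀ x, deriv (y x) 0 = 0)
     :
    ∀ t ∈ Set.Icc (0:ℝ) T,
      (∫ x, (y x t - f x) ^ 2) ≤ c_max ^ 2 * t ^ 2 * ∫ x, ‖gradient f x‖ ^ 2 :=
  stmt_2_general c hc_meas c_min c_max hc_min_pos hc T hT f y hy K hK hyK hwave hinit hinit'
end

section
/- Divergence of the Landweber iteration for data outside the domain of the Moore–Penrose inverse: if 0 < ω, ω·‖L‖² ≤ 1, and the orthogonal projection of m onto the topological closure of the range of L does NOT belong to the range of L, then the norms of the Landweber iterates blow up: ‖f_k(m)‖ → ∞ as k → ∞. -/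
open ContinuousLinearMap Filter

variable {H₁ H₂ : Type*}
  [NormedAddCommGroup H₁] [InnerProductSpace ℝ H₁] [CompleteSpace H₁]
  [NormedAddCommGroup H₂] [InnerProductSpace ℝ H₂] [CompleteSpace H₂]

/-- The Landweber iteration with data `g` and step size `ω`:
`f₀ = 0`, `f_{k+1} = f_k - ω • L*(L f_k - g)`. -/
noncomputable def landweber (L : H₁ →L[ℝ] H₂) (ω : ℝ) (g : H₂) : ℕ → H₁
  | 0 => 0
  | k + 1 =>
      landweber L ω g k - ω • (ContinuousLinearMap.adjoint L) (L (landweber L ω g k) - g)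

/-! The iterates are the partial sums `f_k = ∑_{j<k} B^j (ω • L* m)` of the powers of the positive
contraction `B = 1 - ω L* L`. Their summands have pairwise nonnegative inner products, so
`‖f_b - f_a‖² ≤ ‖f_b‖² - ‖f_a‖²` for `a ≤ b`: the norms increase, and if they stay bounded then
`(f_k)` is Cauchy and converges to some `f`. On the other hand the residuals
`m - L f_k = (1 - ω L L*)^k m` converge to the component of `m` in `(range L)ᗮ = ker L*`, since the
powers of `1 - ω L L*` are contractions that tend to `0` on `range L`. Hence `L f = P m` would lie
in `range L`. -/

open scoped InnerProductSpace InnerProduct Topology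

theorem norm_sum_range_sub_sq_le_of_inner_nonneg {E : Type*} [NormedAddCommGroup E]
    [InnerProductSpace ℝ E] {x : ℕ → E} (hx : ∀ i j, 0 ≤ ⟪x i, x j⟫_ℝ) {a b : ℕ} (hab : a ≤ b) :
    ‖∑ i ∈ Finset.range b, x i - ∑ i ∈ Finset.range a, x i‖ ^ 2
      ≤ ‖∑ i ∈ Finset.range b, x i‖ ^ 2 - ‖∑ i ∈ Finset.range a, x i‖ ^ 2 := by
  rw [← Finset.sum_range_add_sum_Ico _ hab, add_sub_cancel_left, norm_add_sq_real]
  have : 0 ≤ ⟪∑ i ∈ Finset.range a, x i, ∑ i ∈ Finset.Ico a b, x i⟫_ℝ := by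
    rw [sum_inner]
    exact Finset.sum_nonneg fun i _ => by
      rw [inner_sum]; exact Finset.sum_nonneg fun j _ => hx i j
  linarith

theorem tendsto_norm_atTop_or_cauchySeq_of_norm_sub_sq_le {E : Type*}
    [SeminormedAddCommGroup E] {s : ℕ → E}
    (hs : ∀ a b, a ≤ b → ‖s b - s a‖ ^ 2 ≤ ‖s b‖ ^ 2 - ‖s a‖ ^ 2) :
    Tendsto (fun k => ‖s k‖) atTop atTop ∨ CauchySeq s := by
  have hmono : Monotone fun k => ‖s k‖ := fun a b hab =>
    (pow_le_pow_iff_left₀ (norm_nonneg _) (norm_nonneg _) two_ne_zero).1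
      (by nlinarith [hs a b hab, sq_nonneg ‖s b - s a‖])
  refine (tendsto_atTop_of_monotone hmono).imp id fun ⟨l, hl⟩ => ?_
  refine Metric.cauchySeq_iff'.2 fun ε hε => ?_
  obtain ⟨N, hN⟩ := Metric.cauchySeq_iff'.1 (hl.pow 2).cauchySeq (ε ^ 2) (by positivity)
  refine ⟨N, fun n hn => ?_⟩
  have h := (abs_lt.1 (hN n hn)).2
  rw [dist_eq_norm, ← pow_lt_pow_iff_left₀ (norm_nonneg _) hε.le two_ne_zero]
  linarith [hs N n hn]

theorem Filter.Tendsto.of_norm_sq {ι G : Type*} [NormedAddCommGroup G] {l : Filter ι}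
    {v : ι → G} (h : Tendsto (fun i => ‖v i‖ ^ 2) l (𝓝 0)) : Tendsto v l (𝓝 0) :=
  tendsto_zero_iff_norm_tendsto_zero.2 (by simpa using h.sqrt)

theorem ContinuousLinearMap.IsPositive.pow {𝕜 E : Type*} [RCLike 𝕜] [NormedAddCommGroup E]
    [InnerProductSpace 𝕜 E] [CompleteSpace E] {T : E →L[𝕜] E} (hT : T.IsPositive) (n : ℕ) :
    (T ^ n).IsPositive := by
  have hadj : ∀ k, (T ^ k)† = T ^ k := fun k => (hT.isSelfAdjoint.pow k).adjoint_eq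
  rcases Nat.even_or_odd' n with ⟨k, rfl | rfl⟩
  · simpa [hadj, ← mul_def, ← pow_add, ← two_mul] using isPositive_one.conj_adjoint (T ^ k)
  · convert hT.conj_adjoint (T ^ k) using 1
    rw [hadj, ← mul_def, ← mul_def, ← pow_succ', ← pow_add]
    ring_nf

section LandweberOperator

variable {E F : Type*} [NormedAddCommGroup E] [InnerProductSpace ℝ E] [CompleteSpace E]
  [NormedAddCommGroup F] [InnerProductSpace ℝ F] [CompleteSpace F] {A : E →L[ℝ] F} {ω : ℝ}

/- `landweberOp L ω` is the iteration operator of the scheme,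
`f_{k+1} = landweberOp L ω f_k + ω • L* m`, while `landweberOp L* ω` propagates the residuals
`m - L f_k`. -/
variable (A ω) in
noncomputable def landweberOp : E →L[ℝ] E := 1 - ω • (A† ∘L A)

theorem landweberOp_apply (x : E) : landweberOp A ω x = x - ω • adjoint A (A x) := rfl

theorem inner_landweberOp_apply_self (x : E) :
    ⟪landweberOp A ω x, x⟫_ℝ = ‖x‖ ^ 2 - ω * ‖A x‖ ^ 2 := by
  rw [landweberOp_apply, inner_sub_left, real_inner_smul_left, adjoint_inner_left,
    real_inner_self_eq_norm_sq, real_inner_self_eq_norm_sq]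

theorem isPositive_landweberOp (hωA : ω * ‖A‖ ^ 2 ≤ 1) : (landweberOp A ω).IsPositive := by
  refine (isPositive_iff' _).2 ⟨?_, fun x => ?_⟩
  · exact .sub (.one _) (.smul (.all ω) (isPositive_adjoint_comp_self A).isSelfAdjoint)
  · have hA : ‖A x‖ ^ 2 ≤ ‖A‖ ^ 2 * ‖x‖ ^ 2 := by
      rw [← mul_pow]; gcongr; exact A.le_opNorm x
    rw [inner_landweberOp_apply_self]
    rcases le_total 0 ω with hω | hω
    · nlinarith [mul_le_mul_of_nonneg_left hA hω]
    · nlinarith [sq_nonneg ‖A x‖]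

theorem inner_landweberOp_pow_apply_nonneg (hωA : ω * ‖A‖ ^ 2 ≤ 1) (v : E) (i j : ℕ) :
    0 ≤ ⟪(landweberOp A ω ^ i) v, (landweberOp A ω ^ j) v⟫_ℝ := by
  rw [((isPositive_landweberOp hωA).pow i).inner_left_eq_inner_right, ← mul_apply_eq_comp,
    ← pow_add]
  exact ((isPositive_landweberOp hωA).pow (i + j)).inner_nonneg_right v

theorem norm_landweberOp_apply_sq_add_le (hω : 0 ≤ ω) (hωA : ω * ‖A‖ ^ 2 ≤ 1) (x : E) :
    ‖landweberOp A ω x‖ ^ 2 + ω * ‖A x‖ ^ 2 ≤ ‖x‖ ^ 2 := by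
  have hA : ‖adjoint A (A x)‖ ^ 2 ≤ ‖A‖ ^ 2 * ‖A x‖ ^ 2 := by
    rw [← mul_pow, ← adjoint.norm_map A]; gcongr; exact (A†).le_opNorm _
  rw [landweberOp_apply, norm_sub_sq_real, real_inner_smul_right, adjoint_inner_right,
    real_inner_self_eq_norm_sq, norm_smul, mul_pow, Real.norm_eq_abs, sq_abs]
  nlinarith [mul_le_mul_of_nonneg_left hA (sq_nonneg ω),
    mul_le_mul_of_nonneg_left hωA (mul_nonneg hω (sq_nonneg ‖A x‖))]

theorem norm_landweberOp_le (hω : 0 ≤ ω) (hωA : ω * ‖A‖ ^ 2 ≤ 1) : ‖landweberOp A ω‖ ≤ 1 :=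
  opNorm_le_bound _ zero_le_one fun x => by
    have := norm_landweberOp_apply_sq_add_le hω hωA x
    rw [one_mul]
    exact le_of_sq_le_sq (by nlinarith [sq_nonneg ‖A x‖]) (norm_nonneg x)

theorem lipschitzWith_landweberOp_pow (hω : 0 ≤ ω) (hωA : ω * ‖A‖ ^ 2 ≤ 1) (k : ℕ) :
    LipschitzWith 1 (landweberOp A ω ^ k) := by
  have h : LipschitzWith 1 (landweberOp A ω) :=
    (landweberOp A ω).lipschitz.weaken (by exact_mod_cast norm_landweberOp_le hω hωA)
  simpa [FunLike.coe_pow_eq_iterate] using h.iterate k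

theorem summable_norm_apply_landweberOp_pow_sq (hω : 0 < ω) (hωA : ω * ‖A‖ ^ 2 ≤ 1) (x : E) :
    Summable fun k => ‖A ((landweberOp A ω ^ k) x)‖ ^ 2 := by
  set S := landweberOp A ω
  refine summable_of_sum_range_le (c := ‖x‖ ^ 2 / ω) (fun _ => sq_nonneg _) fun n => ?_
  have hstep : ∀ k, ω * ‖A ((S ^ k) x)‖ ^ 2 ≤ ‖(S ^ k) x‖ ^ 2 - ‖(S ^ (k + 1)) x‖ ^ 2 := by
    intro k
    have := norm_landweberOp_apply_sq_add_le hω.le hωA ((S ^ k) x)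
    rw [pow_succ' S k, mul_apply_eq_comp]
    linarith
  have := Finset.sum_le_sum fun k (_ : k ∈ Finset.range n) => hstep k
  rw [← Finset.mul_sum, Finset.sum_range_sub' (fun k => ‖(S ^ k) x‖ ^ 2)] at this
  rw [le_div_iff₀' hω]
  simp only [pow_zero, one_apply_eq_self] at this
  nlinarith [sq_nonneg ‖(S ^ n) x‖]

theorem tendsto_apply_landweberOp_pow (hω : 0 < ω) (hωA : ω * ‖A‖ ^ 2 ≤ 1) (x : E) :
    Tendsto (fun k => A ((landweberOp A ω ^ k) x)) atTop (𝓝 0) :=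
  (summable_norm_apply_landweberOp_pow_sq hω hωA x).tendsto_atTop_zero.of_norm_sq

theorem tendsto_landweberOp_pow_adjoint_apply (hω : 0 < ω) (hωA : ω * ‖A‖ ^ 2 ≤ 1) (u : F) :
    Tendsto (fun k => (landweberOp A ω ^ k) (adjoint A u)) atTop (𝓝 0) := by
  set S := landweberOp A ω
  have hS : ∀ k, (S ^ k).IsPositive := (isPositive_landweberOp hωA).pow
  have hbound : ∀ k, ‖(S ^ k) (adjoint A u)‖ ^ 2 ≤ ‖A ((S ^ (2 * k)) (adjoint A u))‖ * ‖u‖ := by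
    intro k
    rw [← real_inner_self_eq_norm_sq, ← (hS k).inner_left_eq_inner_right, ← mul_apply_eq_comp,
      ← pow_add, ← two_mul, adjoint_inner_right]
    exact real_inner_le_norm _ _
  have hlim := ((tendsto_apply_landweberOp_pow hω hωA (adjoint A u)).comp
    (tendsto_id.const_mul_atTop' two_pos)).norm.mul_const ‖u‖
  rw [norm_zero, zero_mul] at hlim
  exact (squeeze_zero (fun _ => sq_nonneg _) hbound hlim).of_norm_sq

theorem tendsto_landweberOp_pow_of_mem_closure (hω : 0 < ω) (hωA : ω * ‖A‖ ^ 2 ≤ 1) {x : E}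
    (hx : x ∈ (LinearMap.range (adjoint A : F →ₗ[ℝ] E)).topologicalClosure) :
    Tendsto (fun k => (landweberOp A ω ^ k) x) atTop (𝓝 0) := by
  have hclosed : IsClosed {y : E | Tendsto (fun k => (landweberOp A ω ^ k) y) atTop (𝓝 0)} :=
    (LipschitzWith.uniformEquicontinuous _ 1 (lipschitzWith_landweberOp_pow hω.le hωA)
      ).equicontinuous.isClosed_setOfPred_tendsto continuous_const
  rw [← SetLike.mem_coe, Submodule.topologicalClosure_coe] at hx
  refine closure_minimal ?_ hclosed hx
  rintro _ ⟨u, rfl⟩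
  exact tendsto_landweberOp_pow_adjoint_apply hω hωA u

theorem landweberOp_pow_apply_of_apply_eq_zero {x : E} (hx : A x = 0) (k : ℕ) :
    (landweberOp A ω ^ k) x = x := by
  have h : landweberOp A ω x = x := by simp [landweberOp_apply, hx]
  rw [FunLike.coe_pow_eq_iterate]
  exact Function.iterate_fixed h k

theorem tendsto_landweberOp_pow (hω : 0 < ω) (hωA : ω * ‖A‖ ^ 2 ≤ 1) (x : E) :
    Tendsto (fun k => (landweberOp A ω ^ k) x) atTop
      (𝓝 (x - (LinearMap.range (adjoint A : F →ₗ[ℝ] E)).topologicalClosure.starProjection x)) := by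
  set K := (LinearMap.range (adjoint A : F →ₗ[ℝ] E)).topologicalClosure
  have hker : A (x - K.starProjection x) = 0 := by
    have := K.sub_starProjection_mem_orthogonal x
    rwa [Submodule.orthogonal_closure, orthogonal_range, adjoint_adjoint] at this
  have hsplit : ∀ k, (landweberOp A ω ^ k) x
      = (landweberOp A ω ^ k) (K.starProjection x) + (x - K.starProjection x) := fun k => by
    rw [← landweberOp_pow_apply_of_apply_eq_zero hker k, ← map_add, add_sub_cancel]
  simp_rw [hsplit]
  simpa using (tendsto_landweberOp_pow_of_mem_closure hω hωA
    (K.starProjection_apply_mem x)).add_const (x - K.starProjection x)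

end LandweberOperator

section Landweber

variable {L : H₁ →L[ℝ] H₂} {ω : ℝ} {m : H₂}

theorem landweber_succ (k : ℕ) :
    landweber L ω m (k + 1) = landweberOp L ω (landweber L ω m k) + ω • adjoint L m := by
  rw [landweber, landweberOp_apply, map_sub, smul_sub]
  abel

theorem landweber_eq_sum (k : ℕ) :
    landweber L ω m k = ∑ j ∈ Finset.range k, (landweberOp L ω ^ j) (ω • adjoint L m) := by
  induction k with
  | zero => rfl
  | succ k ih =>
    rw [landweber_succ, ih, Finset.sum_range_succ', map_sum, pow_zero, one_apply_eq_self]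
    simp only [← mul_apply_eq_comp, ← pow_succ']

theorem sub_apply_landweber (k : ℕ) :
    m - L (landweber L ω m k) = (landweberOp (adjoint L) ω ^ k) m := by
  induction k with
  | zero => simp [landweber]
  | succ k ih =>
    rw [pow_succ', mul_apply_eq_comp, ← ih, landweberOp_apply, adjoint_adjoint, landweber]
    simp only [map_sub, map_smul, smul_sub]
    abel

end Landweber

theorem stmt_13 (L : H₁ →L[ℝ] H₂) (ω : ℝ) (hω : 0 < ω) (hωL : ω * ‖L‖ ^ 2 ≤ 1)
    (m : H₂)
    (hproj : (Submodule.orthogonalProjectionOnto (LinearMap.range (L : H₁ →ₗ[ℝ] H₂)).topologicalClosure m : H₂)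
      ∉ LinearMap.range (L : H₁ →ₗ[ℝ] H₂)) :
    Tendsto (fun k => ‖landweber L ω m k‖) atTop atTop := by
  rw [Submodule.coe_orthogonalProjectionOnto_apply] at hproj
  have hLf : Tendsto (fun k => L (landweber L ω m k)) atTop
      (𝓝 ((LinearMap.range (L : H₁ →ₗ[ℝ] H₂)).topologicalClosure.starProjection m)) := by
    have hres := tendsto_landweberOp_pow (A := adjoint L) hω
      (by rwa [LinearIsometryEquiv.norm_map]) m
    rw [adjoint_adjoint] at hres
    simp_rw [← sub_apply_landweber] at hres
    simpa using (tendsto_const_nhds (x := m)).sub hres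
  have hsums := tendsto_norm_atTop_or_cauchySeq_of_norm_sub_sq_le fun a b =>
    norm_sum_range_sub_sq_le_of_inner_nonneg
      (inner_landweberOp_pow_apply_nonneg hωL (ω • adjoint L m))
  simp only [← landweber_eq_sum] at hsums
  rcases hsums with h | h
  · exact h
  · obtain ⟨f, hf⟩ := cauchySeq_tendsto_of_complete h
    exact absurd ⟨f, tendsto_nhds_unique ((L.continuous.tendsto f).comp hf) hLf⟩ hproj
end
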